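/- Let U = (H ⊗ I₂) · CNOT be the Bell-measurement unitary acting on ℂ^(Fin 2 × Fin 2). For every a ∈ {0,1}: |⟨00|U|a,a⟩|² = 1/2 and |⟨11|U|1−a, a⟩|² = 1/2. That is, in a measure-and-replay attack—where Alice prepared |Φ⁺⟩ (so after Eve's Z-basis measurement with result a the pair Alice measures is |a,a⟩) or prepared |Ψ⁻⟩ (so the pair she measures is |1−a, a⟩)—the Bell measurement returns the outcome matching the Bell state Alice originally produced (00 for |Φ⁺⟩, 11 for |Ψ⁻⟩) with probability exactly 1/2. Hence, given that Eve attacks the probing bit, MRAD fails to detect the attack with probability 1/2 and detects it with probability 1/2. -/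

import Mathlib

open Matrix Kronecker

/-- The 2×2 Hadamard matrix `(1/√2)·[[1,1],[1,−1]]` over ℂ. -/
noncomputable def Had : Matrix (Fin 2) (Fin 2) ℂ :=
  (1 / Real.sqrt 2 : ℝ) • !![1, 1; 1, -1]

/-- The CNOT matrix with the first qubit as control: `CNOT|a,b⟩ = |a, a⊕b⟩`. -/
def CNOT : Matrix (Fin 2 × Fin 2) (Fin 2 × Fin 2) ℂ :=
  fun i j => if i = (j.1, j.1 + j.2) then 1 else 0

/-- The Bell-measurement unitary `U = (H ⊗ I₂)·CNOT`. -/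
noncomputable def BellU : Matrix (Fin 2 × Fin 2) (Fin 2 × Fin 2) ℂ :=
  (Had ⊗ₖ (1 : Matrix (Fin 2) (Fin 2) ℂ)) * CNOT

/-- Computational basis vector `|ab⟩` of `ℂ^(Fin 2 × Fin 2)`. -/
def ket (a b : Fin 2) : Fin 2 × Fin 2 → ℂ :=
  fun p => if p = (a, b) then 1 else 0

/-!
The column of `U = (H ⊗ I₂)·CNOT` at `|a,b⟩` is `H c a` at the outcomes `(c, a ⊕ b)` and zero
elsewhere: CNOT writes the parity into the second qubit and the Hadamard spreads the first qubit
with amplitudes `±1/√2`. The replayed pairs `|a,a⟩` and `|1−a,a⟩` have parities `0` and `1`,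
matching the second bit of the expected outcomes `00` and `11`, so each occurs with probability
`1/2`.
-/

lemma ket_eq_single (a b : Fin 2) : ket a b = Pi.single (a, b) 1 := by
  ext p
  simp [ket, Pi.single_apply]

lemma mul_CNOT_apply (M : Matrix (Fin 2 × Fin 2) (Fin 2 × Fin 2) ℂ) (p : Fin 2 × Fin 2)
    (a b : Fin 2) : (M * CNOT) p (a, b) = M p (a, a + b) := by
  simp [mul_apply, CNOT]

lemma BellU_apply (c d a b : Fin 2) :
    BellU (c, d) (a, b) = Had c a * (1 : Matrix (Fin 2) (Fin 2) ℂ) d (a + b) := by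
  rw [BellU, mul_CNOT_apply, kroneckerMap_apply]

lemma norm_Had_apply_sq (i j : Fin 2) : ‖Had i j‖ ^ 2 = 1 / 2 := by
  fin_cases i <;> fin_cases j <;> simp [Had]

lemma norm_BellU_apply_sq_of_parity {c d a b : Fin 2} (h : d = a + b) :
    ‖BellU (c, d) (a, b)‖ ^ 2 = 1 / 2 := by
  rw [BellU_apply, h, one_apply_eq, mul_one, norm_Had_apply_sq]

lemma norm_BellU_mulVec_ket_sq_of_parity {c d a b : Fin 2} (h : d = a + b) :
    ‖BellU.mulVec (ket a b) (c, d)‖ ^ 2 = 1 / 2 := by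
  rw [ket_eq_single, mulVec_single_one, col_apply]
  exact norm_BellU_apply_sq_of_parity h

/-- Measure-and-replay attack detection probability: for every `a ∈ {0,1}`,
`|⟨00|U|a,a⟩|² = 1/2` and `|⟨11|U|1−a,a⟩|² = 1/2`. Hence if Alice prepared `|Φ⁺⟩`
(expected outcome 00) or `|Ψ⁻⟩` (expected outcome 11) and Eve measured the probing
bit with result `a`, the Bell measurement returns the outcome matching Alice's
original Bell state with probability exactly 1/2, so MRAD detects the attack with
probability 1/2. -/
theorem mrad_detection_probability_half :
    ∀ a : Fin 2,
      ‖BellU.mulVec (ket a a) ((0 : Fin 2), (0 : Fin 2))‖ ^ 2 = 1 / 2 ∧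
      ‖BellU.mulVec (ket (1 - a) a) ((1 : Fin 2), (1 : Fin 2))‖ ^ 2 = 1 / 2 := by
  intro a
  refine ⟨norm_BellU_mulVec_ket_sq_of_parity ?_, norm_BellU_mulVec_ket_sq_of_parity ?_⟩
  · fin_cases a <;> rfl
  · exact (sub_add_cancel 1 a).symm
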